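/- arXiv:1609.02473 — 4 statements merged into one kernel-verified Lean document; each statement's English description precedes it below -/
import Mathlib

section
/- Let p ≥ 1 be a natural number and c a real constant. Suppose U : ℝ → ℝ is three-times continuously differentiable, satisfies the travelling wave ODE 0 = d/dz[ (1/2) p U^{p−1} (U^2 − U'^2) + (U^p − c)(U − U'') ] for all z, and satisfies the asymptotic decay conditions U(z) → 0, U'(z) → 0, U''(z) → 0 as z → +∞ and as z → −∞. Then U is identically zero. That is, there exist no smooth, asymptotically decaying, nontrivial travelling wave solutions of the gCH equation. -/
open Real Filter Topology

/-!
Integrating the travelling wave ODE once from `+∞`, where everything decays, gives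
`F(U, U', U'') = 0` for the first integral `F`. Multiplying by `2U'` turns `F` into the exact
derivative of `G(U, U') = (U^p - c)(U^2 - U'^2)`, so `G` vanishes as well. Eliminating `U''`
between `F = 0` and `G = 0` leaves `p U^(p-1) (U^2 - U'^2)^2 = 0`; hence `U` vanishes at each of
its critical points. A nonzero `U` decaying at both ends would have a critical point at a maximum
of `U^2`, where `U ≠ 0`.
-/

noncomputable def gchFirstIntegral (p : ℕ) (c u v w : ℝ) : ℝ :=
  (1/2) * (p : ℝ) * u ^ (p-1) * (u^2 - v^2) + (u ^ p - c) * (u - w)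

def gchSecondIntegral (p : ℕ) (c u v : ℝ) : ℝ :=
  (u ^ p - c) * (u^2 - v^2)

theorem gchSecondIntegral_hasDerivAt {p : ℕ} {c : ℝ} {u v : ℝ → ℝ} {v' z : ℝ}
    (hu : HasDerivAt u (v z) z) (hv : HasDerivAt v v' z) :
    HasDerivAt (fun x => gchSecondIntegral p c (u x) (v x))
      (2 * v z * gchFirstIntegral p c (u z) (v z) v') z := by
  refine (((hu.pow p).sub_const c).mul ((hu.pow 2).sub (hv.pow 2))).congr_deriv ?_
  simp only [gchFirstIntegral, Pi.pow_apply, Pi.sub_apply]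
  push_cast
  ring

theorem mul_pow_mul_sq_eq_gchIntegrals (p : ℕ) (c u v w : ℝ) :
    p * u ^ (p-1) * (u^2 - v^2)^2 =
      2 * (u^2 - v^2) * gchFirstIntegral p c u v w - 2 * (u - w) * gchSecondIntegral p c u v := by
  unfold gchFirstIntegral gchSecondIntegral
  ring

theorem tendsto_gchFirstIntegral {α : Type*} {l : Filter α} {p : ℕ} {c : ℝ} {u v w : α → ℝ}
    (hu : Tendsto u l (𝓝 0)) (hv : Tendsto v l (𝓝 0)) (hw : Tendsto w l (𝓝 0)) :
    Tendsto (fun x => gchFirstIntegral p c (u x) (v x) (w x)) l (𝓝 0) := by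
  simpa [gchFirstIntegral] using
    (tendsto_const_nhds.mul (hu.pow (p-1))).mul ((hu.pow 2).sub (hv.pow 2)) |>.add
      (((hu.pow p).sub tendsto_const_nhds).mul (hu.sub hw))

theorem tendsto_gchSecondIntegral {α : Type*} {l : Filter α} {p : ℕ} {c : ℝ} {u v : α → ℝ}
    (hu : Tendsto u l (𝓝 0)) (hv : Tendsto v l (𝓝 0)) :
    Tendsto (fun x => gchSecondIntegral p c (u x) (v x)) l (𝓝 0) := by
  simpa [gchSecondIntegral] using ((hu.pow p).sub tendsto_const_nhds).mul ((hu.pow 2).sub (hv.pow 2))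

theorem eq_of_deriv_eq_zero_of_tendsto_atTop {f : ℝ → ℝ} {L : ℝ} (hf : Differentiable ℝ f)
    (hf' : ∀ x, deriv f x = 0) (hlim : Tendsto f atTop (𝓝 L)) (x : ℝ) : f x = L := by
  have hconst : f = fun _ => f x := funext fun y => is_const_of_deriv_eq_zero hf hf' y x
  exact tendsto_nhds_unique (hconst ▸ tendsto_const_nhds) hlim

theorem eq_zero_of_tendsto_cocompact_of_critical_eq_zero {U : ℝ → ℝ} (hU : Differentiable ℝ U)
    (hlim : Tendsto U (cocompact ℝ) (𝓝 0)) (hcrit : ∀ z, deriv U z = 0 → U z = 0) (z₀ : ℝ) :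
    U z₀ = 0 := by
  by_contra hz₀
  have hpos : 0 < U z₀ ^ 2 := by positivity
  obtain ⟨zm, hzm⟩ := (hU.continuous.pow 2).exists_forall_ge' z₀
    (((hlim.pow 2).eventually_lt_const (by simpa using hpos)).mono fun _ h => by simpa using h.le)
  have hmax : IsLocalMax (fun z => U z ^ 2) zm := Eventually.of_forall hzm
  have hUzm : U zm ≠ 0 := fun h => by simpa [h] using hpos.trans_le (hzm z₀)
  have hderiv : 2 * U zm * deriv U zm = 0 := by
    simpa using hmax.hasDerivAt_eq_zero ((hU zm).hasDerivAt.pow 2)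
  exact hUzm (hcrit zm (by simpa [hUzm] using hderiv))

theorem no_smooth_decaying_travelling_waves_general (p : ℕ) (hp : 1 ≤ p) (c : ℝ)
    (U : ℝ → ℝ) (hU : ContDiff ℝ 3 U)
    (hODE : ∀ z : ℝ,
      0 = deriv (fun w =>
        (1/2) * (p : ℝ) * U w ^ (p-1) * ((U w)^2 - (deriv U w)^2)
        + (U w ^ p - c) * (U w - deriv (deriv U) w)) z)
    (hU0top : Tendsto U atTop (nhds 0))
    (hU1top : Tendsto (deriv U) atTop (nhds 0))
    (hU2top : Tendsto (deriv (deriv U)) atTop (nhds 0))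
    (hU0bot : Tendsto U atBot (nhds 0)) :
    ∀ z : ℝ, U z = 0 := by
  have hU0 : Differentiable ℝ U := hU.differentiable (by simp)
  have hU1 : Differentiable ℝ (deriv U) := (hU.deriv' (n := 2)).differentiable (by simp)
  have hU2 : Differentiable ℝ (deriv (deriv U)) :=
    ((hU.deriv' (n := 2)).deriv' (n := 1)).differentiable one_ne_zero
  have hF (z : ℝ) : gchFirstIntegral p c (U z) (deriv U z) (deriv (deriv U) z) = 0 :=
    eq_of_deriv_eq_zero_of_tendsto_atTop (by fun_prop)
      (fun x => (hODE x).symm) (tendsto_gchFirstIntegral hU0top hU1top hU2top) z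
  have hG (z : ℝ) : gchSecondIntegral p c (U z) (deriv U z) = 0 := by
    have hG' (x : ℝ) := gchSecondIntegral_hasDerivAt (p := p) (c := c)
      (hU0 x).hasDerivAt (hU1 x).hasDerivAt
    exact eq_of_deriv_eq_zero_of_tendsto_atTop (fun x => (hG' x).differentiableAt)
      (fun x => by simp [(hG' x).deriv, hF]) (tendsto_gchSecondIntegral hU0top hU1top) z
  refine eq_zero_of_tendsto_cocompact_of_critical_eq_zero hU0
    (by rw [cocompact_eq_atBot_atTop]; exact hU0bot.sup hU0top) fun z hz => ?_
  have h := mul_pow_mul_sq_eq_gchIntegrals p c (U z) (deriv U z) (deriv (deriv U) z)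
  rw [hF, hG, hz] at h
  have hp0 : (p : ℝ) ≠ 0 := Nat.cast_ne_zero.mpr (by omega)
  have hUp : U z ^ (p - 1) * U z ^ 4 = 0 := mul_left_cancel₀ hp0 (by linear_combination h)
  exact (mul_eq_zero.mp hUp).elim eq_zero_of_pow_eq_zero eq_zero_of_pow_eq_zero

theorem no_smooth_decaying_travelling_waves (p : ℕ) (hp : 1 ≤ p) (c : ℝ)
    (U : ℝ → ℝ) (hU : ContDiff ℝ 3 U)
    (hODE : ∀ z : ℝ,
      0 = deriv (fun w =>
        (1/2) * (p : ℝ) * U w ^ (p-1) * ((U w)^2 - (deriv U w)^2)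
        + (U w ^ p - c) * (U w - deriv (deriv U) w)) z)
    (hU0top : Tendsto U atTop (nhds 0))
    (hU1top : Tendsto (deriv U) atTop (nhds 0))
    (hU2top : Tendsto (deriv (deriv U)) atTop (nhds 0))
    (hU0bot : Tendsto U atBot (nhds 0))
    (hU1bot : Tendsto (deriv U) atBot (nhds 0))
    (hU2bot : Tendsto (deriv (deriv U)) atBot (nhds 0)) :
    ∀ z : ℝ, U z = 0 :=
  no_smooth_decaying_travelling_waves_general p hp c U hU hODE hU0top hU1top hU2top hU0bot
end

section
/- Let p > 0 be a real number, c a real constant, a > 0, and define U(z) = a·e^{−|z|} and V(z) = −a·sgn(z)·e^{−|z|} (so V is the derivative of U away from z = 0, with sgn(0) = 0). Then for every smooth compactly supported test function φ : ℝ → ℝ, ∫_{−∞}^{+∞} [ −c(φ U + φ' V) + (1/2) p φ U^{p−1}(U^2 − V^2) + φ U^{p+1} + V·(φ' U^p + p φ U^{p−1} V) ] dz = 2(a^{p+1} − a c)·φ(0). -/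
open Real MeasureTheory Filter Set

theorem peakon_weak_form_integral (p : ℝ) (hp : 0 < p) (c : ℝ) (a : ℝ) (ha : 0 < a)
    (U V : ℝ → ℝ)
    (hU : ∀ z : ℝ, U z = a * Real.exp (-|z|))
    (hV : ∀ z : ℝ, V z = -a * Real.sign z * Real.exp (-|z|)) :
    ∀ φ : ℝ → ℝ, ContDiff ℝ (⊤ : ℕ∞) φ → HasCompactSupport φ →
      ∫ z : ℝ,
        (-c * (φ z * U z + deriv φ z * V z)
          + (1/2) * p * φ z * U z ^ (p-1) * ((U z)^2 - (V z)^2)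
          + φ z * U z ^ (p+1)
          + V z * (deriv φ z * U z ^ p + p * φ z * U z ^ (p-1) * V z)) =
      2 * (a ^ (p+1) - a * c) * φ 0 := by
  intro φ hφ hφc
  have hφd : ∀ z : ℝ, HasDerivAt φ (deriv φ z) z :=
    fun z => (hφ.differentiable (by simp) z).hasDerivAt
  have hφ' : Continuous (deriv φ) := hφ.continuous_deriv (by simp)
  -- the integrand
  set F : ℝ → ℝ := fun z =>
        (-c * (φ z * U z + deriv φ z * V z)
          + (1/2) * p * φ z * U z ^ (p-1) * ((U z)^2 - (V z)^2)
          + φ z * U z ^ (p+1)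
          + V z * (deriv φ z * U z ^ p + p * φ z * U z ^ (p-1) * V z)) with hF
  -- right-side antiderivative
  set w : ℝ → ℝ := fun z => a * Real.exp (-z) with hwdef
  have hwpos : ∀ z, 0 < w z := fun z => mul_pos ha (Real.exp_pos _)
  have hwc : Continuous w := continuous_const.mul (Real.continuous_exp.comp continuous_neg)
  have hwd : ∀ z : ℝ, HasDerivAt w (-(w z)) z := by
    intro z
    have h := ((hasDerivAt_id z).neg).exp.const_mul a
    simpa [hwdef, mul_comm] using h
  have hwpd : ∀ z : ℝ, HasDerivAt (fun z => w z ^ (p+1)) ((p+1) * w z ^ p * (-(w z))) z := by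
    intro z
    have h := (hwd z).rpow_const (p := p+1) (Or.inl (hwpos z).ne')
    rw [show p + 1 - 1 = p by ring] at h
    convert h using 1
    ring
  set HR : ℝ → ℝ := fun z => φ z * (c * w z - w z ^ (p+1)) with hHRdef
  set HR' : ℝ → ℝ := fun z =>
      deriv φ z * (c * w z - w z ^ (p+1))
      + φ z * (c * (-(w z)) - (p+1) * w z ^ p * (-(w z))) with hHR'def
  have hHRd : ∀ z : ℝ, HasDerivAt HR (HR' z) z := by
    intro z
    exact (hφd z).mul (((hwd z).const_mul c).sub (hwpd z))
  -- left-side antiderivative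
  set u : ℝ → ℝ := fun z => a * Real.exp z with hudef
  have hupos : ∀ z, 0 < u z := fun z => mul_pos ha (Real.exp_pos _)
  have huc : Continuous u := continuous_const.mul Real.continuous_exp
  have hud : ∀ z : ℝ, HasDerivAt u (u z) z := by
    intro z
    have h := (Real.hasDerivAt_exp z).const_mul a
    simpa [hudef, mul_comm] using h
  have hupd : ∀ z : ℝ, HasDerivAt (fun z => u z ^ (p+1)) ((p+1) * u z ^ p * u z) z := by
    intro z
    have h := (hud z).rpow_const (p := p+1) (Or.inl (hupos z).ne')
    rw [show p + 1 - 1 = p by ring] at h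
    convert h using 1
    ring
  set HL : ℝ → ℝ := fun z => φ z * (-(c * u z) + u z ^ (p+1)) with hHLdef
  set HL' : ℝ → ℝ := fun z =>
      deriv φ z * (-(c * u z) + u z ^ (p+1))
      + φ z * (-(c * u z) + (p+1) * u z ^ p * u z) with hHL'def
  have hHLd : ∀ z : ℝ, HasDerivAt HL (HL' z) z := by
    intro z
    exact (hφd z).mul (((hud z).const_mul c).neg.add (hupd z))
  -- continuity and integrability of the derivatives
  have hwpc : Continuous (fun z => w z ^ (p+1)) :=
    hwc.rpow_const (fun z => Or.inl (hwpos z).ne')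
  have hwpc' : Continuous (fun z => w z ^ p) :=
    hwc.rpow_const (fun z => Or.inl (hwpos z).ne')
  have hupc : Continuous (fun z => u z ^ (p+1)) :=
    huc.rpow_const (fun z => Or.inl (hupos z).ne')
  have hupc' : Continuous (fun z => u z ^ p) :=
    huc.rpow_const (fun z => Or.inl (hupos z).ne')
  have hHR'c : Continuous HR' := by
    refine (hφ'.mul ((continuous_const.mul hwc).sub hwpc)).add
      ((hφ.continuous).mul ((continuous_const.mul hwc.neg).sub
        ((continuous_const.mul hwpc').mul hwc.neg)))
  have hHL'c : Continuous HL' := by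
    refine (hφ'.mul (((continuous_const.mul huc).neg).add hupc)).add
      ((hφ.continuous).mul (((continuous_const.mul huc).neg).add
        ((continuous_const.mul hupc').mul huc)))
  have hsuppHR' : HasCompactSupport HR' := by
    have h1 : HasCompactSupport (fun z => deriv φ z * (c * w z - w z ^ (p+1))) :=
      (hφc.deriv).mul_right
    have h2 : HasCompactSupport
        (fun z => φ z * (c * (-(w z)) - (p+1) * w z ^ p * (-(w z)))) := hφc.mul_right
    exact h1.add h2
  have hsuppHL' : HasCompactSupport HL' := by
    have h1 : HasCompactSupport (fun z => deriv φ z * (-(c * u z) + u z ^ (p+1))) :=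
      (hφc.deriv).mul_right
    have h2 : HasCompactSupport
        (fun z => φ z * (-(c * u z) + (p+1) * u z ^ p * u z)) := hφc.mul_right
    exact h1.add h2
  have hintHR' : Integrable HR' := hHR'c.integrable_of_hasCompactSupport hsuppHR'
  have hintHL' : Integrable HL' := hHL'c.integrable_of_hasCompactSupport hsuppHL'
  -- tendsto of antiderivatives
  obtain ⟨r, hr⟩ : ∃ r : ℝ, tsupport φ ⊆ Metric.closedBall 0 r :=
    hφc.isBounded.subset_closedBall 0
  have hHRtop : Tendsto HR atTop (nhds 0) := by
    have hz : HR =ᶠ[atTop] (fun _ => (0:ℝ)) := by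
      filter_upwards [eventually_gt_atTop r] with z hz
      have hφz : φ z = 0 := by
        apply image_eq_zero_of_notMem_tsupport
        intro hm
        have := hr hm
        rw [Metric.mem_closedBall, Real.dist_eq, sub_zero] at this
        exact absurd (le_trans (le_abs_self z) this) (not_le.mpr hz)
      simp [hHRdef, hφz]
    exact Tendsto.congr' hz.symm tendsto_const_nhds
  have hHLbot : Tendsto HL atBot (nhds 0) := by
    have hz : HL =ᶠ[atBot] (fun _ => (0:ℝ)) := by
      filter_upwards [eventually_lt_atBot (-r)] with z hz
      have hφz : φ z = 0 := by
        apply image_eq_zero_of_notMem_tsupport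
        intro hm
        have := hr hm
        rw [Metric.mem_closedBall, Real.dist_eq, sub_zero] at this
        exact absurd (le_trans (neg_le_abs z) this) (not_le.mpr (by linarith))
      simp [hHLdef, hφz]
    exact Tendsto.congr' hz.symm tendsto_const_nhds
  -- FTC on each half line
  have hFTCr : ∫ z in Ioi (0:ℝ), HR' z = 0 - HR 0 :=
    integral_Ioi_of_hasDerivAt_of_tendsto' (fun x _ => hHRd x)
      hintHR'.integrableOn hHRtop
  have hFTCl : ∫ z in Iic (0:ℝ), HL' z = HL 0 - 0 :=
    integral_Iic_of_hasDerivAt_of_tendsto' (fun x _ => hHLd x)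
      hintHL'.integrableOn hHLbot
  -- pointwise identities
  have heqR : EqOn F HR' (Ioi 0) := by
    intro z hz
    have hz0 : (0:ℝ) < z := hz
    have ht : (0:ℝ) < a * Real.exp (-z) := mul_pos ha (Real.exp_pos _)
    have e1 : (a * Real.exp (-z)) ^ p = (a * Real.exp (-z)) ^ (p-1) * (a * Real.exp (-z)) := by
      rw [← Real.rpow_add_one ht.ne' (p-1)]; ring_nf
    have e2 : (a * Real.exp (-z)) ^ (p+1)
        = (a * Real.exp (-z)) ^ (p-1) * (a * Real.exp (-z)) * (a * Real.exp (-z)) := by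
      rw [← e1, ← Real.rpow_add_one ht.ne' p]
    simp only [hF, hHR'def, hwdef, hU, hV, abs_of_pos hz0, Real.sign_of_pos hz0]
    rw [e1, e2]
    ring
  have heqL : EqOn F HL' (Iio 0) := by
    intro z hz
    have hz0 : z < (0:ℝ) := hz
    have ht : (0:ℝ) < a * Real.exp z := mul_pos ha (Real.exp_pos _)
    have e1 : (a * Real.exp z) ^ p = (a * Real.exp z) ^ (p-1) * (a * Real.exp z) := by
      rw [← Real.rpow_add_one ht.ne' (p-1)]; ring_nf
    have e2 : (a * Real.exp z) ^ (p+1)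
        = (a * Real.exp z) ^ (p-1) * (a * Real.exp z) * (a * Real.exp z) := by
      rw [← e1, ← Real.rpow_add_one ht.ne' p]
    simp only [hF, hHL'def, hudef, hU, hV, abs_of_neg hz0, Real.sign_of_neg hz0, neg_neg]
    rw [e1, e2]
    ring
  -- integrability of F on the half lines
  have hFIoi : IntegrableOn F (Ioi 0) :=
    (hintHR'.integrableOn).congr_fun (fun z hz => (heqR hz).symm) measurableSet_Ioi
  have hFIio : IntegrableOn F (Iio 0) :=
    (hintHL'.integrableOn).congr_fun (fun z hz => (heqL hz).symm) measurableSet_Iio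
  have hFIic : IntegrableOn F (Iic 0) := by
    rw [integrableOn_Iic_iff_integrableOn_Iio]; exact hFIio
  -- assemble
  have hsplit : ∫ z, F z = (∫ z in Iic (0:ℝ), F z) + ∫ z in Ioi (0:ℝ), F z :=
    (intervalIntegral.integral_Iic_add_Ioi hFIic hFIoi).symm
  have hIr : ∫ z in Ioi (0:ℝ), F z = 0 - HR 0 := by
    rw [setIntegral_congr_fun measurableSet_Ioi heqR]; exact hFTCr
  have hIl : ∫ z in Iic (0:ℝ), F z = HL 0 - 0 := by
    rw [integral_Iic_eq_integral_Iio, setIntegral_congr_fun measurableSet_Iio heqL,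
      ← integral_Iic_eq_integral_Iio]
    exact hFTCl
  rw [hsplit, hIl, hIr]
  simp only [hHRdef, hHLdef, hwdef, hudef, Real.exp_zero, mul_one, neg_zero]
  ring
end

section
/- Let p be a nonzero real number and c > 0, and set a = c^{1/p}, U(z) = a·e^{−|z|}, V(z) = −a·sgn(z)·e^{−|z|} (with sgn(0) = 0). Then U is a weak solution of the travelling wave ODE of the gCH equation: for every smooth compactly supported test function φ : ℝ → ℝ, ∫_{−∞}^{+∞} [ −c(φ U + φ' V) + (1/2) p φ U^{p−1}(U^2 − V^2) + φ U^{p+1} + V·(φ' U^p + p φ U^{p−1} V) ] dz = 0. Hence the gCH equation admits the peaked travelling wave u(t,x) = c^{1/p} e^{−|x+ct|} for every p ≠ 0. -/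
open Real MeasureTheory Set Filter

theorem peakon_is_weak_solution (p : ℝ) (hp : p ≠ 0) (c : ℝ) (hc : 0 < c)
    (a : ℝ) (ha : a = c ^ (1/p))
    (U V : ℝ → ℝ)
    (hU : ∀ z : ℝ, U z = a * Real.exp (-|z|))
    (hV : ∀ z : ℝ, V z = -a * Real.sign z * Real.exp (-|z|)) :
    ∀ φ : ℝ → ℝ, ContDiff ℝ (⊤ : ℕ∞) φ → HasCompactSupport φ →
      ∫ z : ℝ,
        (-c * (φ z * U z + deriv φ z * V z)
          + (1/2) * p * φ z * U z ^ (p-1) * ((U z)^2 - (V z)^2)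
          + φ z * U z ^ (p+1)
          + V z * (deriv φ z * U z ^ p + p * φ z * U z ^ (p-1) * V z)) = 0 := by
  intro φ hφ hφc
  have ha' : 0 < a := ha ▸ Real.rpow_pos_of_pos hc _
  have hap : a ^ p = c := by
    rw [ha, ← Real.rpow_mul hc.le, one_div, inv_mul_cancel₀ hp, Real.rpow_one]
  have hφd : Differentiable ℝ φ := hφ.differentiable (by simp)
  have hφ'c : Continuous (deriv φ) := hφ.continuous_deriv (by simp)
  -- the two pieces and their derivatives
  set g1 : ℝ → ℝ := fun z => c * a * (φ z * (Real.exp ((p+1)*z) - Real.exp z)) with hg1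
  set g2 : ℝ → ℝ := fun z => c * a * (φ z * (Real.exp (-z) - Real.exp (-(p+1)*z))) with hg2
  set d1 : ℝ → ℝ := fun z => c * a * (deriv φ z * (Real.exp ((p+1)*z) - Real.exp z)
      + φ z * ((p+1) * Real.exp ((p+1)*z) - Real.exp z)) with hd1
  set d2 : ℝ → ℝ := fun z => c * a * (deriv φ z * (Real.exp (-z) - Real.exp (-(p+1)*z))
      + φ z * (-Real.exp (-z) + (p+1) * Real.exp (-(p+1)*z))) with hd2
  have hD1 : ∀ z : ℝ, HasDerivAt g1 (d1 z) z := by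
    intro z
    have h1 : HasDerivAt (fun z : ℝ => Real.exp ((p+1)*z)) ((p+1) * Real.exp ((p+1)*z)) z := by
      simpa [mul_comm] using ((hasDerivAt_id z).const_mul (p+1)).exp
    have h2 : HasDerivAt (fun z : ℝ => Real.exp z) (Real.exp z) z := Real.hasDerivAt_exp z
    have : HasDerivAt (fun y => c * a * (φ y * (Real.exp ((p+1)*y) - Real.exp y)))
        (c * a * (deriv φ z * (Real.exp ((p+1)*z) - Real.exp z)
          + φ z * ((p+1) * Real.exp ((p+1)*z) - Real.exp z))) z :=
      (((hφd z).hasDerivAt).mul (h1.sub h2)).const_mul (c*a)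
    convert this using 1
    try ring
  have hD2 : ∀ z : ℝ, HasDerivAt g2 (d2 z) z := by
    intro z
    have h1 : HasDerivAt (fun z : ℝ => Real.exp (-z)) (-Real.exp (-z)) z := by
      simpa using ((hasDerivAt_id z).neg).exp
    have h2 : HasDerivAt (fun z : ℝ => Real.exp (-(p+1)*z)) (-(p+1) * Real.exp (-(p+1)*z)) z := by
      simpa [mul_comm] using ((hasDerivAt_id z).const_mul (-(p+1))).exp
    have : HasDerivAt (fun y => c * a * (φ y * (Real.exp (-y) - Real.exp (-(p+1)*y))))
        (c * a * (deriv φ z * (Real.exp (-z) - Real.exp (-(p+1)*z))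
          + φ z * (-Real.exp (-z) - -(p+1) * Real.exp (-(p+1)*z)))) z :=
      (((hφd z).hasDerivAt).mul (h1.sub h2)).const_mul (c*a)
    convert this using 1
    try ring
  -- the glued derivative
  set F : ℝ → ℝ := fun z => if z ≤ 0 then d1 z else d2 z with hF
  have hd1c : Continuous d1 := by
    apply Continuous.mul continuous_const
    exact (hφ'c.mul (by fun_prop)).add ((hφ.continuous).mul (by fun_prop))
  have hd2c : Continuous d2 := by
    apply Continuous.mul continuous_const
    exact (hφ'c.mul (by fun_prop)).add ((hφ.continuous).mul (by fun_prop))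
  have hFc : Continuous F := by
    apply hd1c.if_le hd2c continuous_id continuous_const
    intro x hx
    subst hx
    simp only [hd1, hd2, mul_zero, zero_mul, neg_zero, Real.exp_zero]
    ring
  have hsupp : ∀ z : ℝ, z ∉ tsupport φ → (φ z = 0 ∧ deriv φ z = 0) :=
    fun z hz => ⟨image_eq_zero_of_notMem_tsupport hz,
      Function.notMem_support.mp (fun h => hz (support_deriv_subset h))⟩
  have hFcs : HasCompactSupport F := by
    apply hφc.mono'
    intro z hz
    by_contra hzt
    obtain ⟨h1, h2⟩ := hsupp z hzt
    apply hz
    simp [hF, hd1, hd2, h1, h2]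
  have hFint : Integrable F := hFc.integrable_of_hasCompactSupport hFcs
  -- pointwise identification of the integrand with F away from 0
  have key : ∀ z : ℝ, z ≠ 0 →
      (-c * (φ z * U z + deriv φ z * V z)
        + (1/2) * p * φ z * U z ^ (p-1) * ((U z)^2 - (V z)^2)
        + φ z * U z ^ (p+1)
        + V z * (deriv φ z * U z ^ p + p * φ z * U z ^ (p-1) * V z)) = F z := by
    intro z hz
    have hep : ∀ q : ℝ, (a * Real.exp (-|z|)) ^ q = a ^ q * Real.exp (-q * |z|) := by
      intro q
      rw [Real.mul_rpow ha'.le (Real.exp_pos _).le, ← Real.exp_mul]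
      ring_nf
    have ha1 : a ^ (p-1) * a * a = c * a := by
      rw [show a ^ (p-1) * a = a ^ (p-1) * a ^ (1:ℝ) by rw [Real.rpow_one],
        ← Real.rpow_add ha', sub_add_cancel, hap]
    have ha2 : a ^ (p+1) = c * a := by
      rw [show (p+1 : ℝ) = p + 1 from rfl, Real.rpow_add ha', hap, Real.rpow_one]
    have h3 : a ^ (p-1) = c / a := by
      rw [Real.rpow_sub ha', Real.rpow_one, hap]
    rcases lt_or_gt_of_ne hz with hneg | hpos
    · -- z < 0
      have habs : |z| = -z := abs_of_neg hneg
      have hsgn : Real.sign z = -1 := Real.sign_of_neg hneg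
      rw [hU, hV, hep, hep, hep, habs, hsgn]
      show _ = if z ≤ 0 then d1 z else d2 z
      rw [if_pos hneg.le]
      simp only [hd1, neg_neg]
      have h1 : Real.exp (-(p-1) * -z) = Real.exp (p*z) / Real.exp z := by
        rw [← Real.exp_sub]; congr 1; ring
      have h2 : Real.exp (-(p+1) * -z) = Real.exp (p*z) * Real.exp z := by
        rw [← Real.exp_add]; congr 1; ring
      have h4 : Real.exp ((p+1) * z) = Real.exp (p*z) * Real.exp z := by
        rw [← Real.exp_add]; congr 1; ring
      have h5 : Real.exp (-p * -z) = Real.exp (p*z) := by congr 1; ring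
      rw [h1, h2, h4, h5, h3, ha2, hap]
      field_simp
      ring
    · -- z > 0
      have habs : |z| = z := abs_of_pos hpos
      have hsgn : Real.sign z = 1 := Real.sign_of_pos hpos
      rw [hU, hV, hep, hep, hep, habs, hsgn]
      show _ = if z ≤ 0 then d1 z else d2 z
      rw [if_neg (not_le.mpr hpos)]
      simp only [hd2]
      have h1 : Real.exp (-(p-1) * z) = Real.exp (-(p*z)) * Real.exp z := by
        rw [← Real.exp_add]; congr 1; ring
      have h2 : Real.exp (-(p+1) * z) = Real.exp (-(p*z)) * Real.exp (-z) := by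
        rw [← Real.exp_add]; congr 1; ring
      have h4 : Real.exp (-(p+1) * z) = Real.exp (-(p*z)) * Real.exp (-z) := h2
      have h5 : Real.exp (-p * z) = Real.exp (-(p*z)) := by congr 1; ring
      have h6 : Real.exp (-(p*z)) = (Real.exp (p*z))⁻¹ := by
        rw [← Real.exp_neg]
      rw [h1, h2, h5, h3, ha2, hap, h6, Real.exp_neg z]
      field_simp
      ring
  -- replace the integrand by F
  have hae : (fun z : ℝ =>
      (-c * (φ z * U z + deriv φ z * V z)
        + (1/2) * p * φ z * U z ^ (p-1) * ((U z)^2 - (V z)^2)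
        + φ z * U z ^ (p+1)
        + V z * (deriv φ z * U z ^ p + p * φ z * U z ^ (p-1) * V z))) =ᵐ[volume] F := by
    have h0 : ({(0:ℝ)} : Set ℝ)ᶜ ∈ ae (volume : Measure ℝ) :=
      compl_mem_ae_iff.mpr (measure_singleton 0)
    filter_upwards [h0] with z hz
    exact key z hz
  rw [integral_congr_ae hae]
  -- split the integral and evaluate both halves
  rw [← intervalIntegral.integral_Iic_add_Ioi (hFint.integrableOn) (hFint.integrableOn)]
  have hg1cd : ContDiff ℝ 1 g1 :=
    contDiff_const.mul ((hφ.of_le (by simp)).mul (by fun_prop))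
  have hg2cd : ContDiff ℝ 1 g2 :=
    contDiff_const.mul ((hφ.of_le (by simp)).mul (by fun_prop))
  have hg1cs : HasCompactSupport g1 := by
    apply hφc.mono'
    intro z hz
    by_contra hzt
    exact hz (by simp [hg1, image_eq_zero_of_notMem_tsupport hzt])
  have hg2cs : HasCompactSupport g2 := by
    apply hφc.mono'
    intro z hz
    by_contra hzt
    exact hz (by simp [hg2, image_eq_zero_of_notMem_tsupport hzt])
  have e1 : ∫ z in Iic (0:ℝ), F z = 0 := by
    rw [setIntegral_congr_fun measurableSet_Iic
      (fun z (hz : z ∈ Iic (0:ℝ)) => if_pos (mem_Iic.mp hz))]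
    have : ∀ z : ℝ, d1 z = deriv g1 z := fun z => ((hD1 z).deriv).symm
    rw [setIntegral_congr_fun measurableSet_Iic (fun z _ => this z)]
    rw [hg1cs.integral_Iic_deriv_eq hg1cd 0]
    simp [hg1]
  have e2 : ∫ z in Ioi (0:ℝ), F z = 0 := by
    rw [setIntegral_congr_fun measurableSet_Ioi
      (fun z (hz : z ∈ Ioi (0:ℝ)) => if_neg (not_le.mpr (mem_Ioi.mp hz)))]
    have : ∀ z : ℝ, d2 z = deriv g2 z := fun z => ((hD2 z).deriv).symm
    rw [setIntegral_congr_fun measurableSet_Ioi (fun z _ => this z)]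
    rw [hg2cs.integral_Ioi_deriv_eq hg2cd 0]
    simp [hg2]
  rw [e1, e2, add_zero]
end

section
/- Let p > 0 be a real number, a > 0, and define U(z) = a·e^{−|z|} and V(z) = −a·sgn(z)·e^{−|z|} (with sgn(0) = 0). Then for every smooth compactly supported test function φ : ℝ → ℝ, ∫_{−∞}^{+∞} [ p^{−1}(φ U + φ' V) + (1/2) p φ' U^{p−1}(U^2 − V^2) + φ' U^{p+1} + (φ'' U^p + p φ' U^{p−1} V)·V ] dz = 2 a p^{−1} φ(0) + 2 a^{p+1} φ'(0). -/
open Real MeasureTheory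

namespace PeakonAux

noncomputable def gp (p a : ℝ) (φ : ℝ → ℝ) (z : ℝ) : ℝ :=
  p⁻¹ * a * (φ z - deriv φ z) * Real.exp (-z)
    + a ^ (p+1) * ((p+1) * deriv φ z - deriv (deriv φ) z) * Real.exp (-((p+1)*z))

noncomputable def gm (p a : ℝ) (φ : ℝ → ℝ) (z : ℝ) : ℝ :=
  p⁻¹ * a * (φ z + deriv φ z) * Real.exp z
    + a ^ (p+1) * ((p+1) * deriv φ z + deriv (deriv φ) z) * Real.exp ((p+1)*z)

noncomputable def Fp (p a : ℝ) (φ : ℝ → ℝ) (z : ℝ) : ℝ :=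
  -(p⁻¹ * a * φ z * Real.exp (-z)) - a ^ (p+1) * deriv φ z * Real.exp (-((p+1)*z))

noncomputable def Fm (p a : ℝ) (φ : ℝ → ℝ) (z : ℝ) : ℝ :=
  p⁻¹ * a * φ z * Real.exp z + a ^ (p+1) * deriv φ z * Real.exp ((p+1)*z)

lemma hasDerivAt_Fp (p a : ℝ) (φ : ℝ → ℝ)
    (hd1 : ∀ z, HasDerivAt φ (deriv φ z) z)
    (hd2 : ∀ z, HasDerivAt (deriv φ) (deriv (deriv φ) z) z) (z : ℝ) :
    HasDerivAt (Fp p a φ) (gp p a φ z) z := by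
  have he1 : HasDerivAt (fun t : ℝ => Real.exp (-t)) (Real.exp (-z) * (-1)) z :=
    ((hasDerivAt_id z).neg).exp
  have he2 : HasDerivAt (fun t : ℝ => Real.exp (-((p+1)*t)))
      (Real.exp (-((p+1)*z)) * (-((p+1)*1))) z :=
    (((hasDerivAt_id z).const_mul (p+1)).neg).exp
  have h1 : HasDerivAt (fun t => p⁻¹ * a * φ t * Real.exp (-t))
      ((p⁻¹ * a * deriv φ z) * Real.exp (-z) + (p⁻¹ * a * φ z) * (Real.exp (-z) * (-1))) z :=
    ((hd1 z).const_mul (p⁻¹ * a)).mul he1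
  have h2 : HasDerivAt (fun t => a ^ (p+1) * deriv φ t * Real.exp (-((p+1)*t)))
      ((a ^ (p+1) * deriv (deriv φ) z) * Real.exp (-((p+1)*z))
        + (a ^ (p+1) * deriv φ z) * (Real.exp (-((p+1)*z)) * (-((p+1)*1)))) z :=
    ((hd2 z).const_mul (a ^ (p+1))).mul he2
  have H : HasDerivAt (Fp p a φ)
      (-((p⁻¹ * a * deriv φ z) * Real.exp (-z) + (p⁻¹ * a * φ z) * (Real.exp (-z) * (-1)))
        - ((a ^ (p+1) * deriv (deriv φ) z) * Real.exp (-((p+1)*z))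
          + (a ^ (p+1) * deriv φ z) * (Real.exp (-((p+1)*z)) * (-((p+1)*1))))) z :=
    (h1.neg).sub h2
  have hD : gp p a φ z =
      -((p⁻¹ * a * deriv φ z) * Real.exp (-z) + (p⁻¹ * a * φ z) * (Real.exp (-z) * (-1)))
        - ((a ^ (p+1) * deriv (deriv φ) z) * Real.exp (-((p+1)*z))
          + (a ^ (p+1) * deriv φ z) * (Real.exp (-((p+1)*z)) * (-((p+1)*1)))) := by
    unfold gp; ring
  rw [hD]; exact H

lemma hasDerivAt_Fm (p a : ℝ) (φ : ℝ → ℝ)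
    (hd1 : ∀ z, HasDerivAt φ (deriv φ z) z)
    (hd2 : ∀ z, HasDerivAt (deriv φ) (deriv (deriv φ) z) z) (z : ℝ) :
    HasDerivAt (Fm p a φ) (gm p a φ z) z := by
  have he1 : HasDerivAt (fun t : ℝ => Real.exp t) (Real.exp z) z := Real.hasDerivAt_exp z
  have he2 : HasDerivAt (fun t : ℝ => Real.exp ((p+1)*t))
      (Real.exp ((p+1)*z) * ((p+1)*1)) z :=
    ((hasDerivAt_id z).const_mul (p+1)).exp
  have h1 : HasDerivAt (fun t => p⁻¹ * a * φ t * Real.exp t)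
      ((p⁻¹ * a * deriv φ z) * Real.exp z + (p⁻¹ * a * φ z) * Real.exp z) z :=
    ((hd1 z).const_mul (p⁻¹ * a)).mul he1
  have h2 : HasDerivAt (fun t => a ^ (p+1) * deriv φ t * Real.exp ((p+1)*t))
      ((a ^ (p+1) * deriv (deriv φ) z) * Real.exp ((p+1)*z)
        + (a ^ (p+1) * deriv φ z) * (Real.exp ((p+1)*z) * ((p+1)*1))) z :=
    ((hd2 z).const_mul (a ^ (p+1))).mul he2
  have H : HasDerivAt (Fm p a φ)
      ((p⁻¹ * a * deriv φ z) * Real.exp z + (p⁻¹ * a * φ z) * Real.exp z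
        + ((a ^ (p+1) * deriv (deriv φ) z) * Real.exp ((p+1)*z)
          + (a ^ (p+1) * deriv φ z) * (Real.exp ((p+1)*z) * ((p+1)*1)))) z :=
    h1.add h2
  have hD : gm p a φ z =
      (p⁻¹ * a * deriv φ z) * Real.exp z + (p⁻¹ * a * φ z) * Real.exp z
        + ((a ^ (p+1) * deriv (deriv φ) z) * Real.exp ((p+1)*z)
          + (a ^ (p+1) * deriv φ z) * (Real.exp ((p+1)*z) * ((p+1)*1))) := by
    unfold gm; ring
  rw [hD]; exact H

end PeakonAux

open PeakonAux

theorem peakon_similarity_weak_form_integral (p : ℝ) (hp : 0 < p)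
    (a : ℝ) (ha : 0 < a)
    (U V : ℝ → ℝ)
    (hU : ∀ z : ℝ, U z = a * Real.exp (-|z|))
    (hV : ∀ z : ℝ, V z = -a * Real.sign z * Real.exp (-|z|)) :
    ∀ φ : ℝ → ℝ, ContDiff ℝ (⊤ : ℕ∞) φ → HasCompactSupport φ →
      ∫ z : ℝ,
        (p⁻¹ * (φ z * U z + deriv φ z * V z)
          + (1/2) * p * deriv φ z * U z ^ (p-1) * ((U z)^2 - (V z)^2)
          + deriv φ z * U z ^ (p+1)
          + (deriv (deriv φ) z * U z ^ p + p * deriv φ z * U z ^ (p-1) * V z) * V z) =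
      2 * a * p⁻¹ * φ 0 + 2 * a ^ (p+1) * deriv φ 0 := by
  intro φ hφ hφc
  have hφ0 : ContDiff ℝ ((⊤:ℕ∞) : WithTop ℕ∞) φ := hφ.of_le (by simp)
  have hφ1 : ContDiff ℝ ((⊤:ℕ∞) : WithTop ℕ∞) (deriv φ) := (contDiff_infty_iff_deriv.mp hφ0).2
  have hφ2 : ContDiff ℝ ((⊤:ℕ∞) : WithTop ℕ∞) (deriv (deriv φ)) := (contDiff_infty_iff_deriv.mp hφ1).2
  have hd1 : ∀ z, HasDerivAt φ (deriv φ z) z := fun z => ((contDiff_infty_iff_deriv.mp hφ0).1 z).hasDerivAt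
  have hd2 : ∀ z, HasDerivAt (deriv φ) (deriv (deriv φ) z) z :=
    fun z => ((contDiff_infty_iff_deriv.mp hφ1).1 z).hasDerivAt
  have hc0 : Continuous φ := hφ.continuous
  have hc1 : Continuous (deriv φ) := hφ1.continuous
  have hc2 : Continuous (deriv (deriv φ)) := hφ2.continuous
  have hs1 : HasCompactSupport (deriv φ) := hφc.deriv
  have hs2 : HasCompactSupport (deriv (deriv φ)) := hs1.deriv
  have hKc : IsCompact (tsupport φ ∪ tsupport (deriv φ) ∪ tsupport (deriv (deriv φ))) :=
    (hφc.union hs1).union hs2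
  have hzero : ∀ x, x ∉ tsupport φ ∪ tsupport (deriv φ) ∪ tsupport (deriv (deriv φ)) →
      φ x = 0 ∧ deriv φ x = 0 ∧ deriv (deriv φ) x = 0 := by
    intro x hx
    refine ⟨image_eq_zero_of_notMem_tsupport fun h => hx (Or.inl (Or.inl h)),
      image_eq_zero_of_notMem_tsupport fun h => hx (Or.inl (Or.inr h)),
      image_eq_zero_of_notMem_tsupport fun h => hx (Or.inr h)⟩
  -- compact support of the auxiliary functions
  have hsgp : HasCompactSupport (gp p a φ) := by
    refine HasCompactSupport.intro hKc fun x hx => ?_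
    obtain ⟨h0, h1, h2⟩ := hzero x hx
    unfold gp; rw [h0, h1, h2]; ring
  have hsgm : HasCompactSupport (gm p a φ) := by
    refine HasCompactSupport.intro hKc fun x hx => ?_
    obtain ⟨h0, h1, h2⟩ := hzero x hx
    unfold gm; rw [h0, h1, h2]; ring
  have hsFp : HasCompactSupport (Fp p a φ) := by
    refine HasCompactSupport.intro hKc fun x hx => ?_
    obtain ⟨h0, h1, h2⟩ := hzero x hx
    unfold Fp; rw [h0, h1]; ring
  have hsFm : HasCompactSupport (Fm p a φ) := by
    refine HasCompactSupport.intro hKc fun x hx => ?_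
    obtain ⟨h0, h1, h2⟩ := hzero x hx
    unfold Fm; rw [h0, h1]; ring
  -- continuity and integrability of gp, gm
  have hcgp : Continuous (gp p a φ) := by
    unfold gp
    exact ((continuous_const.mul (hc0.sub hc1)).mul (Real.continuous_exp.comp continuous_neg)).add
      (((continuous_const.mul ((continuous_const.mul hc1).sub hc2))).mul
        (Real.continuous_exp.comp ((continuous_const.mul continuous_id).neg)))
  have hcgm : Continuous (gm p a φ) := by
    unfold gm
    exact ((continuous_const.mul (hc0.add hc1)).mul Real.continuous_exp).add
      (((continuous_const.mul ((continuous_const.mul hc1).add hc2))).mul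
        (Real.continuous_exp.comp (continuous_const.mul continuous_id)))
  have hIgp : Integrable (gp p a φ) := hcgp.integrable_of_hasCompactSupport hsgp
  have hIgm : Integrable (gm p a φ) := hcgm.integrable_of_hasCompactSupport hsgm
  -- limits at infinity
  have htFp : Filter.Tendsto (Fp p a φ) Filter.atTop (nhds 0) := by
    rw [hasCompactSupport_iff_eventuallyEq, Filter.coclosedCompact_eq_cocompact] at hsFp
    exact (hsFp.filter_mono _root_.atTop_le_cocompact).tendsto
  have htFm : Filter.Tendsto (Fm p a φ) Filter.atBot (nhds 0) := by
    rw [hasCompactSupport_iff_eventuallyEq, Filter.coclosedCompact_eq_cocompact] at hsFm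
    exact (hsFm.filter_mono _root_.atBot_le_cocompact).tendsto
  -- FTC on the two half-lines
  have hIp : ∫ x in Set.Ioi (0:ℝ), gp p a φ x = 0 - Fp p a φ 0 :=
    integral_Ioi_of_hasDerivAt_of_tendsto
      (hasDerivAt_Fp p a φ hd1 hd2 0).continuousAt.continuousWithinAt
      (fun x _ => hasDerivAt_Fp p a φ hd1 hd2 x) hIgp.integrableOn htFp
  have hIm : ∫ x in Set.Iic (0:ℝ), gm p a φ x = Fm p a φ 0 - 0 :=
    integral_Iic_of_hasDerivAt_of_tendsto
      (hasDerivAt_Fm p a φ hd1 hd2 0).continuousAt.continuousWithinAt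
      (fun x _ => hasDerivAt_Fm p a φ hd1 hd2 x) hIgm.integrableOn htFm
  -- the piecewise function equal a.e. to the integrand
  set G : ℝ → ℝ := fun z => if 0 < z then gp p a φ z else gm p a φ z with hGdef
  have hEqm : Set.EqOn G (gm p a φ) (Set.Iic 0) := fun x hx => if_neg (not_lt.mpr hx)
  have hEqp : Set.EqOn G (gp p a φ) (Set.Ioi 0) := fun x hx => if_pos hx
  have key : ∀ z : ℝ, z ≠ 0 →
      p⁻¹ * (φ z * U z + deriv φ z * V z)
        + (1/2) * p * deriv φ z * U z ^ (p-1) * ((U z)^2 - (V z)^2)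
        + deriv φ z * U z ^ (p+1)
        + (deriv (deriv φ) z * U z ^ p + p * deriv φ z * U z ^ (p-1) * V z) * V z = G z := by
    intro z hz
    rcases hz.lt_or_gt with hneg | hpos
    · have hG : G z = gm p a φ z := if_neg (not_lt.mpr hneg.le)
      rw [hG]
      simp only [hU, hV, Real.sign_of_neg hneg, abs_of_neg hneg, neg_neg]
      have hu : (0:ℝ) < a * Real.exp z := mul_pos ha (Real.exp_pos z)
      have e1 : (a * Real.exp z) ^ p = (a * Real.exp z) ^ (p-1) * (a * Real.exp z) := by
        have h := Real.rpow_add_one hu.ne' (p-1)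
        rw [show p - 1 + 1 = p from by ring] at h
        exact h
      have e2 : (a * Real.exp z) ^ (p+1)
          = (a * Real.exp z) ^ (p-1) * (a * Real.exp z) * (a * Real.exp z) := by
        rw [Real.rpow_add_one hu.ne' p, e1]
      have e3 : a ^ (p+1) * Real.exp ((p+1)*z)
          = (a * Real.exp z) ^ (p-1) * (a * Real.exp z) * (a * Real.exp z) := by
        rw [mul_comm (p+1) z, Real.exp_mul, ← Real.mul_rpow ha.le (Real.exp_pos z).le, e2]
      rw [e1, e2]
      unfold gm
      linear_combination (-((p+1) * deriv φ z + deriv (deriv φ) z)) * e3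
    · have hG : G z = gp p a φ z := if_pos hpos
      rw [hG]
      simp only [hU, hV, Real.sign_of_pos hpos, abs_of_pos hpos]
      have hu : (0:ℝ) < a * Real.exp (-z) := mul_pos ha (Real.exp_pos (-z))
      have e1 : (a * Real.exp (-z)) ^ p = (a * Real.exp (-z)) ^ (p-1) * (a * Real.exp (-z)) := by
        have h := Real.rpow_add_one hu.ne' (p-1)
        rw [show p - 1 + 1 = p from by ring] at h
        exact h
      have e2 : (a * Real.exp (-z)) ^ (p+1)
          = (a * Real.exp (-z)) ^ (p-1) * (a * Real.exp (-z)) * (a * Real.exp (-z)) := by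
        rw [Real.rpow_add_one hu.ne' p, e1]
      have e3 : a ^ (p+1) * Real.exp (-((p+1)*z))
          = (a * Real.exp (-z)) ^ (p-1) * (a * Real.exp (-z)) * (a * Real.exp (-z)) := by
        rw [show -((p+1)*z) = -z*(p+1) from by ring, Real.exp_mul,
          ← Real.mul_rpow ha.le (Real.exp_pos (-z)).le, e2]
      rw [e1, e2]
      unfold gp
      linear_combination (-((p+1) * deriv φ z - deriv (deriv φ) z)) * e3
  have hae : (fun z : ℝ =>
      p⁻¹ * (φ z * U z + deriv φ z * V z)
        + (1/2) * p * deriv φ z * U z ^ (p-1) * ((U z)^2 - (V z)^2)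
        + deriv φ z * U z ^ (p+1)
        + (deriv (deriv φ) z * U z ^ p + p * deriv φ z * U z ^ (p-1) * V z) * V z)
      =ᵐ[(volume : Measure ℝ)] G := by
    have h0 : ({(0:ℝ)}ᶜ : Set ℝ) ∈ ae (volume : Measure ℝ) :=
      compl_mem_ae_iff.mpr (measure_singleton 0)
    filter_upwards [h0] with z hz using key z hz
  rw [integral_congr_ae hae]
  have hGm : IntegrableOn G (Set.Iic 0) :=
    (hIgm.integrableOn).congr_fun hEqm.symm measurableSet_Iic
  have hGp : IntegrableOn G (Set.Ioi 0) :=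
    (hIgp.integrableOn).congr_fun hEqp.symm measurableSet_Ioi
  rw [← intervalIntegral.integral_Iic_add_Ioi hGm hGp,
    setIntegral_congr_fun measurableSet_Iic hEqm,
    setIntegral_congr_fun measurableSet_Ioi hEqp, hIm, hIp]
  unfold Fm Fp
  simp only [Real.exp_zero, mul_zero, neg_zero]
  ring
end
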